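/- One-variable descent with Lipschitz step sizes (alternating-minimization step): let ε, α_T, β_T ≥ 0 and z, v ∈ ℂ^d. Define L_v = d·max_{j=1,…,d} Σ_{r∈R} |(S_r v)_j|² + α_T and L_z = d·max_{j=1,…,d} Σ_{r∈R} |(S_{−r} z)_j|² + β_T, and set z₊ = z − L_v^{−1}·∇_z J(z,v) and v₊ = v − L_z^{−1}·∇_v J(z,v). Then L_v ≤ d‖v‖₂² + α_T, L_z ≤ d‖z‖₂² + β_T, and J(z₊, v) ≤ J(z, v) − L_v^{−1}·‖∇_z J(z,v)‖₂² and J(z, v₊) ≤ J(z, v) − L_z^{−1}·‖∇_v J(z,v)‖₂². -/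

import Mathlib

open scoped BigOperators Classical
open Finset

noncomputable section

namespace Ptycho

/-- Entry of the discrete Fourier matrix: `F_{k,j} = exp(-2πi·k·j/d)`. -/
def Fent (d : ℕ) (k j : ZMod d) : ℂ :=
  Complex.exp (-(2 * (Real.pi : ℂ) * Complex.I * (k.val : ℂ) * (j.val : ℂ)) / (d : ℂ))

/-- `[F (z ∘ S_r v)]_k`, i.e. the bilinear form `z^T Q_{r,k} v`. -/
def Qform (d : ℕ) [NeZero d] (r k : ZMod d) (z v : ZMod d → ℂ) : ℂ :=
  ∑ j : ZMod d, z j * Fent d k j * v (j - r)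

/-- Noiseless ptychographic measurement `|[F (x ∘ S_r w)]_k|²`. -/
def meas (d : ℕ) [NeZero d] (r k : ZMod d) (x w : ZMod d → ℂ) : ℝ :=
  ‖Qform d r k x w‖ ^ 2

/-- Squared Euclidean norm `‖u‖₂²`. -/
def nsq (d : ℕ) [NeZero d] (u : ZMod d → ℂ) : ℝ :=
  ∑ j : ZMod d, ‖u j‖ ^ 2

/-- Single-shift amplitude-based loss
`L_{r,ε}(z,v) = Σ_k (√(|z^T Q_{r,k} v|² + ε) − √(y_{r,k} + ε))²`. -/
def lossR (d : ℕ) [NeZero d] (y : ZMod d → ZMod d → ℝ) (ε : ℝ) (r : ZMod d)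
    (z v : ZMod d → ℂ) : ℝ :=
  ∑ k : ZMod d,
    (Real.sqrt (‖Qform d r k z v‖ ^ 2 + ε) - Real.sqrt (y r k + ε)) ^ 2

/-- Amplitude-based loss `L_ε(z,v) = Σ_{r∈R} L_{r,ε}(z,v)`. -/
def loss (d : ℕ) [NeZero d] (R : Finset (ZMod d)) (y : ZMod d → ZMod d → ℝ) (ε : ℝ)
    (z v : ZMod d → ℂ) : ℝ :=
  ∑ r ∈ R, lossR d y ε r z v

/-- Coefficient `1 − √(y_{r,k}+ε)/√(|z^T Q_{r,k} v|²+ε)` appearing in the Wirtinger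
gradients. (Lean's convention `a/0 = 0` realizes the paper's convention, since the
coefficient is always multiplied by `z^T Q_{r,k} v`.) -/
def coef (ε yrk : ℝ) (c : ℂ) : ℝ :=
  1 - Real.sqrt (yrk + ε) / Real.sqrt (‖c‖ ^ 2 + ε)

/-- Wirtinger gradient `∇_z L_{r,ε}(z,v)`; note `(Q_{r,k} v)_j = F_{k,j}·v_{j−r}`. -/
def gradZr (d : ℕ) [NeZero d] (y : ZMod d → ZMod d → ℝ) (ε : ℝ) (r : ZMod d)
    (z v : ZMod d → ℂ) : ZMod d → ℂ := fun j =>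
  ∑ k : ZMod d, (coef ε (y r k) (Qform d r k z v) : ℂ) * Qform d r k z v *
    (starRingEnd ℂ) (Fent d k j * v (j - r))

/-- Wirtinger gradient `∇_v L_{r,ε}(z,v)`; note `(Q_{r,k}^T z)_j = F_{k,j+r}·z_{j+r}`. -/
def gradVr (d : ℕ) [NeZero d] (y : ZMod d → ZMod d → ℝ) (ε : ℝ) (r : ZMod d)
    (z v : ZMod d → ℂ) : ZMod d → ℂ := fun j =>
  ∑ k : ZMod d, (coef ε (y r k) (Qform d r k z v) : ℂ) * Qform d r k z v *
    (starRingEnd ℂ) (Fent d k (j + r) * z (j + r))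

/-- Regularized loss `J(z,v) = L_ε(z,v) + α_T‖z‖₂² + β_T‖v‖₂²`. -/
def Jfun (d : ℕ) [NeZero d] (R : Finset (ZMod d)) (y : ZMod d → ZMod d → ℝ)
    (ε αT βT : ℝ) (z v : ZMod d → ℂ) : ℝ :=
  loss d R y ε z v + αT * nsq d z + βT * nsq d v

/-- Wirtinger gradient `∇_z J(z,v) = ∇_z L_ε(z,v) + α_T z`. -/
def gradZJ (d : ℕ) [NeZero d] (R : Finset (ZMod d)) (y : ZMod d → ZMod d → ℝ)
    (ε αT : ℝ) (z v : ZMod d → ℂ) : ZMod d → ℂ := fun j =>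
  (∑ r ∈ R, gradZr d y ε r z v j) + (αT : ℂ) * z j

/-- Wirtinger gradient `∇_v J(z,v) = ∇_v L_ε(z,v) + β_T v`. -/
def gradVJ (d : ℕ) [NeZero d] (R : Finset (ZMod d)) (y : ZMod d → ZMod d → ℝ)
    (ε βT : ℝ) (z v : ZMod d → ℂ) : ZMod d → ℂ := fun j =>
  (∑ r ∈ R, gradVr d y ε r z v j) + (βT : ℂ) * v j

/-- `‖y/d‖₁ = (1/d)·Σ_{r∈R} Σ_k y_{r,k}`. -/
def yd1 (d : ℕ) [NeZero d] (R : Finset (ZMod d)) (y : ZMod d → ZMod d → ℝ) : ℝ :=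
  (∑ r ∈ R, ∑ k : ZMod d, y r k) / d

/-- Real part of the Hermitian inner product `Re(u* g)`. -/
def reInner (d : ℕ) [NeZero d] (u g : ZMod d → ℂ) : ℝ :=
  (∑ j : ZMod d, (starRingEnd ℂ) (u j) * g j).re

/-- `B(z,v) = 3d·((10/3)‖z‖₂² + (10/3)‖v‖₂² + ‖y/d‖₁^{1/2}) + 3·max{α_T, β_T}`. -/
def Bfun (d : ℕ) [NeZero d] (R : Finset (ZMod d)) (y : ZMod d → ZMod d → ℝ)
    (αT βT : ℝ) (z v : ZMod d → ℂ) : ℝ :=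
  3 * d * ((10 / 3) * nsq d z + (10 / 3) * nsq d v + Real.sqrt (yd1 d R y)) +
    3 * max αT βT

/-- `L_v = d·max_j Σ_{r∈R} |(S_r v)_j|² + α_T` with `(S_r v)_j = v_{j−r}`. -/
def Lv (d : ℕ) [NeZero d] (R : Finset (ZMod d)) (αT : ℝ) (v : ZMod d → ℂ) : ℝ :=
  d * (Finset.univ.sup' ⟨(0 : ZMod d), Finset.mem_univ 0⟩
    fun j => ∑ r ∈ R, ‖v (j - r)‖ ^ 2) + αT

/-- `L_z = d·max_j Σ_{r∈R} |(S_{−r} z)_j|² + β_T` with `(S_{−r} z)_j = z_{j+r}`. -/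
def Lz (d : ℕ) [NeZero d] (R : Finset (ZMod d)) (βT : ℝ) (z : ZMod d → ℂ) : ℝ :=
  d * (Finset.univ.sup' ⟨(0 : ZMod d), Finset.mem_univ 0⟩
    fun j => ∑ r ∈ R, ‖z (j + r)‖ ^ 2) + βT

/-
For fixed `v`, `z ↦ J(z, v)` is, up to the constant `β_T‖v‖²`, the amplitude loss of the linear
measurements `z ↦ z^T Q_{r,k} v` plus a ridge term. Concavity of `√` (in the form of
Cauchy–Schwarz) gives each amplitude term a quadratic majorant at `z`, so
`J(z + h, v) ≤ J(z, v) + 2 Re⟨∇_z J, h⟩ + Σ_{r,k} |h^T Q_{r,k} v|² + α_T‖h‖²`.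
By Parseval, `Σ_k |h^T Q_{r,k} v|² = d Σ_j |h_j|² |v_{j-r}|²`, so the quadratic part is at most
`L_v‖h‖²`, and the step `h = -L_v⁻¹ ∇_z J` decreases `J` by `L_v⁻¹‖∇_z J‖²`.
The `v`-step is the same argument with the roles of `z` and `v` exchanged.
-/

theorem re_inner_add_le_sqrt_mul_sqrt {E : Type*} [NormedAddCommGroup E] [InnerProductSpace ℂ E]
    {ε : ℝ} (hε : 0 ≤ ε) (x y : E) :
    (inner ℂ x y).re + ε ≤ √(‖x‖ ^ 2 + ε) * √(‖y‖ ^ 2 + ε) := by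
  have : ‖x‖ * ‖y‖ + ε ≤ √(‖x‖ ^ 2 + ε) * √(‖y‖ ^ 2 + ε) := by
    rw [← Real.sqrt_mul (by positivity), Real.le_sqrt (by positivity) (by positivity)]
    nlinarith [sq_nonneg (‖x‖ - ‖y‖), norm_nonneg x, norm_nonneg y]
  linarith [(Complex.re_le_norm _).trans (norm_inner_le_norm (𝕜 := ℂ) x y)]

theorem sq_sqrt_sub_sqrt_add_le {ε : ℝ} (hε : 0 ≤ ε) (Y : ℝ) (w δ : ℂ) :
    (√(‖w + δ‖ ^ 2 + ε) - √(Y + ε)) ^ 2 ≤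
      (√(‖w‖ ^ 2 + ε) - √(Y + ε)) ^ 2 + 2 * coef ε Y w * (inner ℂ w δ).re + ‖δ‖ ^ 2 := by
  set s := √(‖w‖ ^ 2 + ε)
  set S := √(‖w + δ‖ ^ 2 + ε)
  set q := √(Y + ε)
  set t := (inner ℂ w δ).re
  have hq : 0 ≤ q := Real.sqrt_nonneg _
  have hs2 : s ^ 2 = ‖w‖ ^ 2 + ε := Real.sq_sqrt (by positivity)
  have hS2 : S ^ 2 = s ^ 2 + 2 * t + ‖δ‖ ^ 2 := by
    rw [Real.sq_sqrt (by positivity), norm_add_sq (𝕜 := ℂ), hs2, RCLike.re_to_complex]; ring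
  -- concavity of `√` at `s ^ 2`: Cauchy–Schwarz for `(w, √ε)` and `(w + δ, √ε)`
  have hconcave : q * s + q / s * t ≤ q * S := by
    rcases eq_or_ne s 0 with hs | hs
    · simpa [hs] using mul_nonneg hq (Real.sqrt_nonneg _)
    have hcs : s ^ 2 + t ≤ s * S := by
      have hsqrt := re_inner_add_le_sqrt_mul_sqrt hε w (w + δ)
      rw [inner_add_right, Complex.add_re, ← RCLike.re_to_complex, inner_self_eq_norm_sq] at hsqrt
      linarith
    calc q * s + q / s * t = q / s * (s ^ 2 + t) := by field_simp
      _ ≤ q / s * (s * S) := by gcongr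
      _ = q * S := by field_simp
  rw [coef]
  nlinarith [hconcave]

section
variable {E κ : Type*} [NormedAddCommGroup E] [InnerProductSpace ℂ E]
  (A : Finset κ) (c : κ → E) (Y : κ → ℝ) (ε α : ℝ)

/-- `ampLoss` is the amplitude loss `L_ε` of the linear measurements `x ↦ ⟪c a, x⟫` plus the
ridge term `α‖x‖²`, and `ampGrad` is its Wirtinger gradient. -/
def ampLoss (x : E) : ℝ :=
  ∑ a ∈ A, (√(‖inner ℂ (c a) x‖ ^ 2 + ε) - √(Y a + ε)) ^ 2 + α * ‖x‖ ^ 2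

def ampGrad (x : E) : E :=
  ∑ a ∈ A, ((coef ε (Y a) (inner ℂ (c a) x) : ℂ) * inner ℂ (c a) x) • c a + (α : ℂ) • x

theorem re_inner_ampGrad (x h : E) :
    (inner ℂ (ampGrad A c Y ε α x) h).re =
      ∑ a ∈ A, coef ε (Y a) (inner ℂ (c a) x) * (inner ℂ (inner ℂ (c a) x) (inner ℂ (c a) h)).re
        + α * (inner ℂ x h).re := by
  simp only [ampGrad, inner_add_left, sum_inner, inner_smul_left, map_mul, Complex.conj_ofReal,
    RCLike.inner_apply', mul_assoc, Complex.add_re, Complex.re_sum, Complex.re_ofReal_mul]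

theorem ampLoss_add_le (hε : 0 ≤ ε) (x h : E) :
    ampLoss A c Y ε α (x + h) ≤ ampLoss A c Y ε α x + 2 * (inner ℂ (ampGrad A c Y ε α x) h).re
      + (∑ a ∈ A, ‖inner ℂ (c a) h‖ ^ 2 + α * ‖h‖ ^ 2) := by
  have hterm := Finset.sum_le_sum fun a (_ : a ∈ A) =>
    sq_sqrt_sub_sqrt_add_le hε (Y a) (inner ℂ (c a) x) (inner ℂ (c a) h)
  simp only [Finset.sum_add_distrib, mul_assoc, ← Finset.mul_sum] at hterm
  simp only [ampLoss, re_inner_ampGrad, inner_add_right, norm_add_sq (𝕜 := ℂ) x h,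
    RCLike.re_to_complex]
  linarith

theorem ampLoss_sub_smul_ampGrad_le (hε : 0 ≤ ε) {L : ℝ}
    (hL : ∀ h : E, ∑ a ∈ A, ‖inner ℂ (c a) h‖ ^ 2 + α * ‖h‖ ^ 2 ≤ L * ‖h‖ ^ 2) (x : E) :
    ampLoss A c Y ε α (x - (L : ℂ)⁻¹ • ampGrad A c Y ε α x) ≤
      ampLoss A c Y ε α x - L⁻¹ * ‖ampGrad A c Y ε α x‖ ^ 2 := by
  set g := ampGrad A c Y ε α x with hg
  have hstep := ampLoss_add_le A c Y ε α hε x (-((L : ℂ)⁻¹ • g))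
  have hL' := hL (-((L : ℂ)⁻¹ • g))
  rw [← sub_eq_add_neg, ← hg] at hstep
  have hinner : (inner ℂ g (-((L : ℂ)⁻¹ • g))).re = -L⁻¹ * ‖g‖ ^ 2 := by
    rw [inner_neg_right, inner_smul_right, inner_self_eq_norm_sq_to_K]
    simp [← Complex.ofReal_pow]
  have hnorm : ‖-((L : ℂ)⁻¹ • g)‖ ^ 2 = L⁻¹ ^ 2 * ‖g‖ ^ 2 := by
    rw [norm_neg, norm_smul, mul_pow, norm_inv, Complex.norm_real, Real.norm_eq_abs, inv_pow,
      sq_abs, inv_pow]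
  have hLL : L * L⁻¹ ^ 2 = L⁻¹ := by
    rcases eq_or_ne L 0 with h | h
    · simp [h]
    · field_simp
  rw [hnorm, ← mul_assoc L, hLL] at hL'
  rw [hnorm, hinner] at hstep
  linarith

end

theorem sum_sum_mul_le_sup'_mul {ι κ : Type*} (s : Finset κ) (t : Finset ι) (ht : t.Nonempty)
    (w : κ → ι → ℝ) (u : ι → ℝ) (hu : ∀ j ∈ t, 0 ≤ u j) :
    ∑ r ∈ s, ∑ j ∈ t, w r j * u j ≤ t.sup' ht (fun j => ∑ r ∈ s, w r j) * ∑ j ∈ t, u j := by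
  rw [Finset.sum_comm, Finset.mul_sum]
  refine Finset.sum_le_sum fun j hj => ?_
  rw [← Finset.sum_mul]
  exact mul_le_mul_of_nonneg_right (Finset.le_sup' (fun j => ∑ r ∈ s, w r j) hj) (hu j hj)

section
variable {d : ℕ} [NeZero d]

open ZMod in
theorem Fent_eq_stdAddChar (k j : ZMod d) :
    Fent d k j = stdAddChar (-(k * j)) := by
  have hcast : (-(k * j) : ZMod d) = ((-(k.val * j.val : ℤ) : ℤ) : ZMod d) := by
    push_cast; rw [natCast_zmod_val, natCast_zmod_val]
  rw [Fent, hcast, stdAddChar_coe]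
  push_cast
  ring_nf

open ZMod in
theorem sum_Fent_mul_conj_Fent (j j' : ZMod d) :
    ∑ k : ZMod d, Fent d k j * starRingEnd ℂ (Fent d k j') = if j = j' then (d : ℂ) else 0 := by
  have hterm (k : ZMod d) :
      Fent d k j * starRingEnd ℂ (Fent d k j') = stdAddChar ((j' - j) * k) := by
    rw [Fent_eq_stdAddChar, Fent_eq_stdAddChar, ← AddChar.map_neg_eq_conj, neg_neg,
      ← AddChar.map_add_eq_mul]
    ring_nf
  simp_rw [hterm]
  split_ifs with h
  · simp [h]
  · exact AddChar.sum_eq_zero_of_ne_one (isPrimitive_stdAddChar d (sub_ne_zero.mpr (Ne.symm h)))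

theorem sum_norm_sq_sum_Fent_mul (u : ZMod d → ℂ) :
    ∑ k : ZMod d, ‖∑ j : ZMod d, Fent d k j * u j‖ ^ 2 = d * ∑ j : ZMod d, ‖u j‖ ^ 2 := by
  apply Complex.ofReal_injective
  push_cast
  simp_rw [← Complex.mul_conj', map_sum, map_mul, Finset.sum_mul_sum, Finset.mul_sum]
  rw [Finset.sum_comm]
  refine Finset.sum_congr rfl fun j _ => ?_
  rw [Finset.sum_comm]
  simp_rw [show ∀ k j', Fent d k j * u j * (starRingEnd ℂ (Fent d k j') * starRingEnd ℂ (u j')) =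
      u j * starRingEnd ℂ (u j') * (Fent d k j * starRingEnd ℂ (Fent d k j')) from
    fun _ _ => by ring, ← Finset.mul_sum, sum_Fent_mul_conj_Fent]
  simp [Complex.mul_conj', mul_comm]

theorem sum_norm_sq_comp_equiv_le (R : Finset (ZMod d)) (σ : ZMod d ≃ ZMod d) (u : ZMod d → ℂ) :
    ∑ r ∈ R, ‖u (σ r)‖ ^ 2 ≤ nsq d u := by
  calc ∑ r ∈ R, ‖u (σ r)‖ ^ 2 ≤ ∑ r, ‖u (σ r)‖ ^ 2 :=
        Finset.sum_le_sum_of_subset_of_nonneg (Finset.subset_univ R) fun _ _ _ => by positivity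
    _ = nsq d u := Equiv.sum_comp σ fun j => ‖u j‖ ^ 2

theorem Lv_le (R : Finset (ZMod d)) (αT : ℝ) (v : ZMod d → ℂ) :
    Lv d R αT v ≤ d * nsq d v + αT := by
  unfold Lv
  gcongr
  exact Finset.sup'_le _ _ fun j _ => sum_norm_sq_comp_equiv_le R (Equiv.subLeft j) v

theorem Lz_le (R : Finset (ZMod d)) (βT : ℝ) (z : ZMod d → ℂ) :
    Lz d R βT z ≤ d * nsq d z + βT := by
  unfold Lz
  gcongr
  exact Finset.sup'_le _ _ fun j _ => sum_norm_sq_comp_equiv_le R (Equiv.addLeft j) z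

theorem sum_norm_sq_Qform (r : ZMod d) (z v : ZMod d → ℂ) :
    ∑ k, ‖Qform d r k z v‖ ^ 2 = d * ∑ j, ‖z j‖ ^ 2 * ‖v (j - r)‖ ^ 2 := by
  simp_rw [← mul_pow, ← norm_mul]
  rw [← sum_norm_sq_sum_Fent_mul]
  refine Finset.sum_congr rfl fun k _ => ?_
  simp only [Qform, mul_left_comm (z _), mul_assoc]

theorem norm_toLp_sq (u : ZMod d → ℂ) : ‖WithLp.toLp 2 u‖ ^ 2 = nsq d u := by
  simp [EuclideanSpace.norm_sq_eq, nsq]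

-- `z^T Q_{r,k} v = ⟪conjQv d v r k, z⟫ = ⟪conjQTz d z r k, v⟫`: these are `conj (Q_{r,k} v)` and
-- `conj (Q_{r,k}^T z)`.
def conjQv (d : ℕ) (v : ZMod d → ℂ) (r k : ZMod d) : EuclideanSpace ℂ (ZMod d) :=
  WithLp.toLp 2 fun j => starRingEnd ℂ (Fent d k j * v (j - r))

def conjQTz (d : ℕ) (z : ZMod d → ℂ) (r k : ZMod d) : EuclideanSpace ℂ (ZMod d) :=
  WithLp.toLp 2 fun j => starRingEnd ℂ (Fent d k (j + r) * z (j + r))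

theorem inner_conjQv (v : ZMod d → ℂ) (r k : ZMod d) (h : EuclideanSpace ℂ (ZMod d)) :
    inner ℂ (conjQv d v r k) h = Qform d r k h.ofLp v := by
  simp only [conjQv, PiLp.inner_apply, RCLike.inner_apply', Complex.conj_conj, Qform]
  exact Finset.sum_congr rfl fun j _ => by ring

theorem inner_conjQTz (z : ZMod d → ℂ) (r k : ZMod d) (h : EuclideanSpace ℂ (ZMod d)) :
    inner ℂ (conjQTz d z r k) h = Qform d r k z h.ofLp := by
  simp only [conjQTz, PiLp.inner_apply, RCLike.inner_apply', Complex.conj_conj, Qform]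
  exact Fintype.sum_equiv (Equiv.addRight r) _ _ fun j => by simp [mul_comm]

end

section
variable {d : ℕ} [NeZero d] (R : Finset (ZMod d)) (y : ZMod d → ZMod d → ℝ) (ε αT βT : ℝ)

theorem Jfun_eq_ampLoss_conjQv (z v : ZMod d → ℂ) :
    Jfun d R y ε αT βT z v =
      ampLoss (R ×ˢ univ) (fun a => conjQv d v a.1 a.2) (fun a => y a.1 a.2) ε αT
        (WithLp.toLp 2 z) + βT * nsq d v := by
  simp only [Jfun, loss, lossR, ampLoss, Finset.sum_product, inner_conjQv, norm_toLp_sq]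

theorem Jfun_eq_ampLoss_conjQTz (z v : ZMod d → ℂ) :
    Jfun d R y ε αT βT z v =
      ampLoss (R ×ˢ univ) (fun a => conjQTz d z a.1 a.2) (fun a => y a.1 a.2) ε βT
        (WithLp.toLp 2 v) + αT * nsq d z := by
  simp only [Jfun, loss, lossR, ampLoss, Finset.sum_product, inner_conjQTz, norm_toLp_sq]
  ring

theorem toLp_gradZJ (z v : ZMod d → ℂ) :
    WithLp.toLp 2 (gradZJ d R y ε αT z v) =
      ampGrad (R ×ˢ univ) (fun a => conjQv d v a.1 a.2) (fun a => y a.1 a.2) ε αT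
        (WithLp.toLp 2 z) := by
  simp only [ampGrad, inner_conjQv]
  ext j
  simp [gradZJ, gradZr, Finset.sum_product, conjQv]

theorem toLp_gradVJ (z v : ZMod d → ℂ) :
    WithLp.toLp 2 (gradVJ d R y ε βT z v) =
      ampGrad (R ×ˢ univ) (fun a => conjQTz d z a.1 a.2) (fun a => y a.1 a.2) ε βT
        (WithLp.toLp 2 v) := by
  simp only [ampGrad, inner_conjQTz]
  ext j
  simp [gradVJ, gradVr, Finset.sum_product, conjQTz]

theorem sum_norm_sq_inner_conjQv_add_le (v : ZMod d → ℂ) (h : EuclideanSpace ℂ (ZMod d)) :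
    ∑ a ∈ R ×ˢ univ, ‖inner ℂ (conjQv d v a.1 a.2) h‖ ^ 2 + αT * ‖h‖ ^ 2 ≤
      Lv d R αT v * ‖h‖ ^ 2 := by
  have hsum := sum_sum_mul_le_sup'_mul R univ univ_nonempty (fun r j => ‖v (j - r)‖ ^ 2)
    (fun j => ‖h.ofLp j‖ ^ 2) fun _ _ => by positivity
  simp only [Finset.sum_product, inner_conjQv, sum_norm_sq_Qform, ← Finset.mul_sum,
    EuclideanSpace.norm_sq_eq, Lv, add_mul, mul_assoc]
  gcongr
  simpa only [mul_comm] using hsum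

theorem sum_norm_sq_inner_conjQTz_add_le (z : ZMod d → ℂ) (h : EuclideanSpace ℂ (ZMod d)) :
    ∑ a ∈ R ×ˢ univ, ‖inner ℂ (conjQTz d z a.1 a.2) h‖ ^ 2 + βT * ‖h‖ ^ 2 ≤
      Lz d R βT z * ‖h‖ ^ 2 := by
  have hsum := sum_sum_mul_le_sup'_mul R univ univ_nonempty (fun r j => ‖z (j + r)‖ ^ 2)
    (fun j => ‖h.ofLp j‖ ^ 2) fun _ _ => by positivity
  have hshift (r : ZMod d) : ∑ j, ‖z j‖ ^ 2 * ‖h.ofLp (j - r)‖ ^ 2 =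
      ∑ j, ‖z (j + r)‖ ^ 2 * ‖h.ofLp j‖ ^ 2 :=
    (Fintype.sum_equiv (Equiv.addRight r) _ _ fun j => by simp).symm
  simp only [Finset.sum_product, inner_conjQTz, sum_norm_sq_Qform, hshift, ← Finset.mul_sum,
    EuclideanSpace.norm_sq_eq, Lz, add_mul, mul_assoc]
  gcongr

theorem Jfun_sub_smul_gradZJ_le (hε : 0 ≤ ε) (z v : ZMod d → ℂ) :
    Jfun d R y ε αT βT (fun j => z j - ((Lv d R αT v)⁻¹ : ℂ) * gradZJ d R y ε αT z v j) v
      ≤ Jfun d R y ε αT βT z v - (Lv d R αT v)⁻¹ * nsq d (gradZJ d R y ε αT z v) := by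
  have hdescent := ampLoss_sub_smul_ampGrad_le (R ×ˢ univ) (fun a => conjQv d v a.1 a.2)
    (fun a => y a.1 a.2) ε αT hε (sum_norm_sq_inner_conjQv_add_le R αT v) (WithLp.toLp 2 z)
  rw [← toLp_gradZJ, norm_toLp_sq, ← WithLp.toLp_smul, ← WithLp.toLp_sub] at hdescent
  rw [Jfun_eq_ampLoss_conjQv, Jfun_eq_ampLoss_conjQv]
  exact (add_le_add_left hdescent _).trans_eq (by ring)

theorem Jfun_sub_smul_gradVJ_le (hε : 0 ≤ ε) (z v : ZMod d → ℂ) :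
    Jfun d R y ε αT βT z (fun j => v j - ((Lz d R βT z)⁻¹ : ℂ) * gradVJ d R y ε βT z v j)
      ≤ Jfun d R y ε αT βT z v - (Lz d R βT z)⁻¹ * nsq d (gradVJ d R y ε βT z v) := by
  have hdescent := ampLoss_sub_smul_ampGrad_le (R ×ˢ univ) (fun a => conjQTz d z a.1 a.2)
    (fun a => y a.1 a.2) ε βT hε (sum_norm_sq_inner_conjQTz_add_le R βT z) (WithLp.toLp 2 v)
  rw [← toLp_gradVJ, norm_toLp_sq, ← WithLp.toLp_smul, ← WithLp.toLp_sub] at hdescent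
  rw [Jfun_eq_ampLoss_conjQTz, Jfun_eq_ampLoss_conjQTz]
  exact (add_le_add_left hdescent _).trans_eq (by ring)

end

theorem one_variable_descent_general (d : ℕ) [NeZero d]
    (R : Finset (ZMod d))
    (y : ZMod d → ZMod d → ℝ)
    (ε αT βT : ℝ) (hε : 0 ≤ ε)
    (z v : ZMod d → ℂ) :
    Lv d R αT v ≤ d * nsq d v + αT ∧
    Lz d R βT z ≤ d * nsq d z + βT ∧
    Jfun d R y ε αT βT (fun j => z j - ((Lv d R αT v)⁻¹ : ℂ) * gradZJ d R y ε αT z v j) v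
      ≤ Jfun d R y ε αT βT z v - (Lv d R αT v)⁻¹ * nsq d (gradZJ d R y ε αT z v) ∧
    Jfun d R y ε αT βT z (fun j => v j - ((Lz d R βT z)⁻¹ : ℂ) * gradVJ d R y ε βT z v j)
      ≤ Jfun d R y ε αT βT z v - (Lz d R βT z)⁻¹ * nsq d (gradVJ d R y ε βT z v) :=
  ⟨Lv_le R αT v, Lz_le R βT z, Jfun_sub_smul_gradZJ_le R y ε αT βT hε z v,
    Jfun_sub_smul_gradVJ_le R y ε αT βT hε z v⟩

/-- **One-variable descent with Lipschitz step sizes** (alternating-minimization step,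
Theorem 3.5 / version of Filbir–Melnyk): with `z₊ = z − L_v^{−1}∇_z J(z,v)` and
`v₊ = v − L_z^{−1}∇_v J(z,v)`, one has `L_v ≤ d‖v‖₂² + α_T`, `L_z ≤ d‖z‖₂² + β_T`,
`J(z₊,v) ≤ J(z,v) − L_v^{−1}‖∇_z J(z,v)‖₂²` and `J(z,v₊) ≤ J(z,v) − L_z^{−1}‖∇_v J(z,v)‖₂²`. -/
theorem one_variable_descent (d : ℕ) [NeZero d]
    (R : Finset (ZMod d)) (hR : R.Nonempty)
    (y : ZMod d → ZMod d → ℝ) (hy : ∀ r ∈ R, ∀ k : ZMod d, 0 ≤ y r k)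
    (ε αT βT : ℝ) (hε : 0 ≤ ε) (hαT : 0 ≤ αT) (hβT : 0 ≤ βT)
    (z v : ZMod d → ℂ) :
    Lv d R αT v ≤ d * nsq d v + αT ∧
    Lz d R βT z ≤ d * nsq d z + βT ∧
    Jfun d R y ε αT βT (fun j => z j - ((Lv d R αT v)⁻¹ : ℂ) * gradZJ d R y ε αT z v j) v
      ≤ Jfun d R y ε αT βT z v - (Lv d R αT v)⁻¹ * nsq d (gradZJ d R y ε αT z v) ∧
    Jfun d R y ε αT βT z (fun j => v j - ((Lz d R βT z)⁻¹ : ℂ) * gradVJ d R y ε βT z v j)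
      ≤ Jfun d R y ε αT βT z v - (Lz d R βT z)⁻¹ * nsq d (gradVJ d R y ε βT z v) :=
  one_variable_descent_general d R y ε αT βT hε z v

end Ptycho
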